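/- Ackermann membership satisfies the replacement scheme: for every natural number m and every function f : ℕ → ℕ there exists a natural number c such that for every natural number k, k ∈ₐ c if and only if there is some j with j ∈ₐ m and f j = k. -/

import Mathlib

/-! Ackermann's coding `m ↦ {n | n ∈ₐ m}` is the bijection `Finset.equivBitIndices : ℕ ≃ Finset ℕ`,
so the image of the finite set coded by `m` under `f` is again coded by some `c`. -/

/-- Ackermann membership: `n ∈ₐ m` iff the `n`-th binary digit of `m` is `1`. -/
def AckMem (n m : ℕ) : Prop := Nat.testBit m n = true

theorem ackMem_iff_mem_equivBitIndices {n m : ℕ} : AckMem n m ↔ n ∈ Finset.equivBitIndices m := by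
  simp [AckMem]

theorem exists_ackMem_iff_mem (s : Finset ℕ) : ∃ c : ℕ, ∀ k : ℕ, AckMem k c ↔ k ∈ s :=
  ⟨Finset.equivBitIndices.symm s, fun k => by
    rw [ackMem_iff_mem_equivBitIndices, Equiv.apply_symm_apply]⟩

/-- Replacement for Ackermann membership. -/
theorem ackMem_replacement (m : ℕ) (f : ℕ → ℕ) :
    ∃ c : ℕ, ∀ k : ℕ, AckMem k c ↔ ∃ j : ℕ, AckMem j m ∧ f j = k := by
  obtain ⟨c, hc⟩ := exists_ackMem_iff_mem ((Finset.equivBitIndices m).image f)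
  exact ⟨c, fun k => by simp only [hc, Finset.mem_image, ackMem_iff_mem_equivBitIndices]⟩
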